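/- Let A₁, …, A_n be subsets of ℝ, each equal to either an extreme interval E_V ∈ {[0,1], [k-1,k]} or an interval from a pair Ω_j = {[j, j+1], [k-1-j, k-j]} with 1 ≤ j < k/2, and suppose all the pairs Ω_{j} occurring are distinct and no A_i is of the central form [(k-1)/2, (k+1)/2]. Define the 'opposite' operation Ā = {k - x : x ∈ A}. Then for all i ≠ j among the non-extreme coordinates with distinct characteristics, A_i ≠ A_j and A_i ≠ Ā_j; consequently any transformation of the tuple obtained by composing moves each of which transposes two coordinates and replaces one of them by its opposite changes the parity of the coordinate permutation and the parity of the number of replaced-by-opposite coordinates simultaneously, so a tuple cannot be transformed into the tuple obtained from it by replacing exactly one coordinate by its opposite without permuting. -/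

import Mathlib

/-- The unit interval E_j = [j, j+1] ⊆ ℝ. -/
def EInterval (j : ℕ) : Set ℝ := Set.Icc (j : ℝ) (j + 1)

/-- The opposite of a subset A ⊆ ℝ: its image under x ↦ k - x. -/
def oppSet (k : ℕ) (A : Set ℝ) : Set ℝ := (fun x : ℝ => (k : ℝ) - x) '' A

/-- One layer-turn move on a position tuple: it transposes two coordinates and
replaces one of them by its opposite. -/
def TurnStep (k : ℕ) {n : ℕ} (A B : Fin n → Set ℝ) : Prop :=
  ∃ i j : Fin n, i ≠ j ∧
    B = fun m => if m = i then oppSet k (A j) else if m = j then A i else A m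


/-!
Each turn composes the current signed permutation of the coordinates with a transposition and
flips one sign, so the product `sign σ · ∏ (±1)` of a reachable tuple stays `1`. The hypotheses
on the intervals say that the `2n` sets `A m`, `oppSet k (A m)` are pairwise distinct (their
characteristics `min (j, k - 1 - j)` differ, and none of them is the central interval), so a
tuple determines its signed permutation. Flipping a single coordinate in place has signed
permutation `(1, {i})`, whose product is `-1`.
-/

open Equiv Function

lemma EInterval_injective : Injective EInterval := by
  intro a b h
  have ha : (a : ℝ) ∈ EInterval b := h ▸ ⟨le_rfl, by linarith⟩
  have hb : (b : ℝ) ∈ EInterval a := h.symm ▸ ⟨le_rfl, by linarith⟩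
  exact_mod_cast le_antisymm hb.1 ha.1

lemma oppSet_EInterval {k j : ℕ} (h : j + 1 ≤ k) :
    oppSet k (EInterval j) = EInterval (k - 1 - j) := by
  have hcast : ((k - 1 - j : ℕ) : ℝ) = k - 1 - j := by
    rw [Nat.cast_sub (by omega), Nat.cast_sub (by omega)]
    push_cast
    ring
  rw [oppSet, EInterval, EInterval, Set.image_const_sub_Icc, hcast]
  congr 1 <;> ring

lemma oppSet_oppSet (k : ℕ) (A : Set ℝ) : oppSet k (oppSet k A) = A := by
  simp [oppSet, Set.image_image]

/-- Each of `A m`, `oppSet k (A m)` is some `EInterval j` with `min j (k - 1 - j) = c m`, and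
`j ≠ k - 1 - j` since `c m` is off the centre. -/
lemma injective_cond_oppSet {ι : Type*} {k : ℕ} {A : ι → Set ℝ} {c : ι → ℕ}
    (hc : Injective c) (hck : ∀ m, 2 * c m + 1 < k)
    (hA : ∀ m, A m = EInterval (c m) ∨ A m = EInterval (k - 1 - c m)) :
    Injective fun p : ι × Bool => cond p.2 (oppSet k (A p.1)) (A p.1) := by
  have hex : ∀ m, ∃ e, A m = EInterval e ∧ (e = c m ∨ e = k - 1 - c m) := fun m =>
    (hA m).elim (fun h => ⟨c m, h, Or.inl rfl⟩) fun h => ⟨k - 1 - c m, h, Or.inr rfl⟩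
  choose e he using hex
  have hval : ∀ m (b : Bool),
      cond b (oppSet k (A m)) (A m) = EInterval (cond b (k - 1 - e m) (e m)) := fun m b => by
    have hle : e m + 1 ≤ k := by have := hck m; have := (he m).2; omega
    cases b
    · exact (he m).1
    · rw [cond_true, cond_true, (he m).1, oppSet_EInterval hle]
  rintro ⟨m, b⟩ ⟨m', b'⟩ h
  have hidx : cond b (k - 1 - e m) (e m) = cond b' (k - 1 - e m') (e m') :=
    EInterval_injective (by rw [← hval, ← hval]; exact h)
  have hm : m = m' := hc <| by
    have := hck m; have := hck m'; have := (he m).2; have := (he m').2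
    cases b <;> cases b' <;> simp only [cond] at hidx <;> omega
  subst hm
  have := hck m; have := (he m).2
  cases b <;> cases b' <;> simp only [cond] at hidx <;> first | rfl | omega

lemma injective_update_of_ne {ι β : Type*} [DecidableEq ι] {f : ι → β} {i₀ : ι} {a : β}
    (hf : ∀ i j, i ≠ i₀ → j ≠ i₀ → i ≠ j → f i ≠ f j) (ha : ∀ i, i ≠ i₀ → f i ≠ a) :
    Injective (update f i₀ a) := by
  intro m m' h
  by_contra hne
  by_cases hm : m = i₀ <;> by_cases hm' : m' = i₀
  · exact hne (hm.trans hm'.symm)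
  · subst hm
    exact ha m' hm' (by simpa [hm'] using h.symm)
  · subst hm'
    exact ha m hm (by simpa [hm] using h)
  · exact hf m m' hm hm' hne (by simpa [hm, hm'] using h)

section SignedPerm

variable {k n : ℕ}

def signedPerm (k : ℕ) (A : Fin n → Set ℝ) (σ : Perm (Fin n)) (s : Fin n → Bool) :
    Fin n → Set ℝ :=
  fun m => cond (s m) (oppSet k (A (σ m))) (A (σ m))

def flipSign (s : Fin n → Bool) : ℤˣ := ∏ m, (-1) ^ (s m).toNat

lemma flipSign_comp_perm (s : Fin n → Bool) (σ : Perm (Fin n)) :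
    flipSign (s ∘ σ) = flipSign s :=
  Equiv.prod_comp σ fun m => (-1) ^ (s m).toNat

lemma flipSign_update_not (t : Fin n → Bool) (i : Fin n) :
    flipSign (update t i (!t i)) = -flipSign t := by
  have hsign : ((-1 : ℤˣ) ^ (!t i).toNat) = -(-1) ^ (t i).toNat := by cases t i <;> decide
  unfold flipSign
  rw [Finset.prod_eq_mul_prod_sdiff_singleton_of_mem (Finset.mem_univ i)
      (fun m => (-1 : ℤˣ) ^ (update t i (!t i) m).toNat),
    Finset.prod_eq_mul_prod_sdiff_singleton_of_mem (Finset.mem_univ i)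
      (fun m => (-1 : ℤˣ) ^ (t m).toNat),
    update_self, hsign, neg_mul]
  congr 2
  refine Finset.prod_congr rfl fun m hm => ?_
  rw [update_of_ne (by simpa using hm)]

lemma signedPerm_turnStep {A B : Fin n → Set ℝ} {σ : Perm (Fin n)} {s : Fin n → Bool}
    {i j : Fin n} (hij : i ≠ j)
    (hB : B = fun m => if m = i then oppSet k (signedPerm k A σ s j)
      else if m = j then signedPerm k A σ s i else signedPerm k A σ s m) :
    B = signedPerm k A (σ * swap i j) (update (s ∘ swap i j) i (!s j)) := by
  funext m
  subst hB
  by_cases hi : m = i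
  · subst hi
    cases hs : s j <;> simp [signedPerm, hs, oppSet_oppSet]
  · by_cases hj : m = j
    · subst hj
      simp [signedPerm, hi]
    · simp [signedPerm, hi, hj, swap_apply_of_ne_of_ne hi hj]

lemma exists_signedPerm_of_reflTransGen {A B : Fin n → Set ℝ}
    (h : Relation.ReflTransGen (TurnStep k) A B) :
    ∃ σ s, B = signedPerm k A σ s ∧ Perm.sign σ * flipSign s = 1 := by
  induction h with
  | refl => exact ⟨1, fun _ => false, rfl, by simp [flipSign]⟩
  | tail _ hstep ih =>
    obtain ⟨σ, s, rfl, hsign⟩ := ih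
    obtain ⟨i, j, hij, hC⟩ := hstep
    refine ⟨σ * swap i j, _, signedPerm_turnStep hij hC, ?_⟩
    have hsj : s j = (s ∘ swap i j) i := by simp
    rw [hsj, flipSign_update_not, flipSign_comp_perm, Perm.sign_mul, Perm.sign_swap hij,
      mul_neg_one, neg_mul_neg, hsign]

lemma signedPerm_inj {A : Fin n → Set ℝ}
    (hA : Injective fun p : Fin n × Bool => cond p.2 (oppSet k (A p.1)) (A p.1))
    {σ σ' : Perm (Fin n)} {s s' : Fin n → Bool}
    (h : signedPerm k A σ s = signedPerm k A σ' s') : σ = σ' ∧ s = s' := by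
  have hp : ∀ m, (σ m, s m) = (σ' m, s' m) := fun m => hA (congrFun h m)
  exact ⟨Equiv.ext fun m => congrArg Prod.fst (hp m), funext fun m => congrArg Prod.snd (hp m)⟩

lemma update_oppSet_eq_signedPerm (A : Fin n → Set ℝ) (i : Fin n) :
    update A i (oppSet k (A i)) = signedPerm k A 1 (update (fun _ => false) i true) := by
  funext m
  by_cases hm : m = i
  · subst hm
    simp [signedPerm]
  · simp [signedPerm, hm]

theorem not_reflTransGen_update_oppSet {A : Fin n → Set ℝ}
    (hA : Injective fun p : Fin n × Bool => cond p.2 (oppSet k (A p.1)) (A p.1)) (i : Fin n) :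
    ¬ Relation.ReflTransGen (TurnStep k) A (update A i (oppSet k (A i))) := by
  intro h
  obtain ⟨σ, s, hB, hsign⟩ := exists_signedPerm_of_reflTransGen h
  rw [update_oppSet_eq_signedPerm] at hB
  obtain ⟨rfl, rfl⟩ := signedPerm_inj hA hB
  have hflip : flipSign (update (fun _ : Fin n => false) i true) = -1 := by
    simpa [flipSign] using flipSign_update_not (fun _ : Fin n => false) i
  rw [hflip, Perm.sign_one, one_mul] at hsign
  exact absurd hsign (by decide)

end SignedPerm

/-- Parity obstruction for special classes: if A is a tuple of intervals with one
extreme coordinate i₀ (E₀ or E_{k-1}) and the other coordinates drawn from pairs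
Ω_j = {E_j, E_{k-1-j}} (1 ≤ j < k/2) with pairwise distinct characteristics, then
the non-extreme coordinates are pairwise neither equal nor opposite, and the tuple
obtained from A by replacing exactly one coordinate by its opposite is not reachable
from A by composing moves each of which transposes two coordinates and replaces one
by its opposite. -/
theorem stmt19 (n k : ℕ) (hk : 2 ≤ k) (A : Fin n → Set ℝ) (i₀ : Fin n)
    (hA0 : A i₀ = EInterval 0 ∨ A i₀ = EInterval (k - 1))
    (ch : Fin n → ℕ)
    (hch : ∀ i, i ≠ i₀ → 1 ≤ ch i ∧ ch i < k / 2)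
    (hpair : ∀ i, i ≠ i₀ → A i = EInterval (ch i) ∨ A i = EInterval (k - 1 - ch i))
    (hinj : ∀ i j, i ≠ i₀ → j ≠ i₀ → i ≠ j → ch i ≠ ch j) :
    (∀ i j, i ≠ i₀ → j ≠ i₀ → i ≠ j → A i ≠ A j ∧ A i ≠ oppSet k (A j)) ∧
    ∀ i : Fin n,
      ¬ Relation.ReflTransGen (TurnStep k) A (Function.update A i (oppSet k (A i))) := by
  set c := update ch i₀ 0
  have hc : Injective c :=
    injective_update_of_ne hinj fun i hi => by have := hch i hi; omega
  have hck : ∀ m, 2 * c m + 1 < k := fun m => by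
    rcases eq_or_ne m i₀ with rfl | hm
    · simp only [c, update_self]; omega
    · have := hch m hm; simp only [c, update_of_ne hm]; omega
  have hcA : ∀ m, A m = EInterval (c m) ∨ A m = EInterval (k - 1 - c m) := fun m => by
    rcases eq_or_ne m i₀ with rfl | hm
    · simpa [c] using hA0
    · simpa [c, hm] using hpair m hm
  have hA := injective_cond_oppSet hc hck hcA
  refine ⟨fun i j _ _ hij => ⟨fun h => ?_, fun h => ?_⟩, not_reflTransGen_update_oppSet hA⟩
  · exact hij (congrArg Prod.fst (@hA (i, false) (j, false) h))
  · exact hij (congrArg Prod.fst (@hA (i, false) (j, true) h))
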